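/- The twisted-measurement localization protocol correctly discriminates the twisted basis: for input state |ψ_i⟩ ∈ {|00⟩, |01⟩, |1+⟩, |1-⟩} on qubits A₁ (Alice) and B₁ (Bob), with a resource ebit Φ⁺ on qubits A₂ (Alice) and B₂ (Bob), suppose Bob performs a Bell measurement of (B₁,B₂) with outcome b (updating Alice's qubits to (I⊗σ_b)|ψ_i⟩ on (A₁,A₂) up to normalization after appropriate bookkeeping), and Alice measures A₁ in the Z basis obtaining a₁, then measures A₂ in the Z basis if a₁=0 and in the X basis if a₁=1, obtaining a₂. Then the triple (a₁, a₂, b) determines |ψ_i⟩ uniquely: a₁ distinguishes {|00⟩,|01⟩} from {|1+⟩,|1-⟩}, and a₂ XOR f(b) (for an explicit function f of the Bell outcome) identifies the state within the pair. -/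
import Mathlib


open Matrix
open scoped Kronecker BigOperators ComplexOrder

noncomputable section

/-- Hermitian inner product (conjugate-linear in the first argument). -/
def dot {I : Type*} [Fintype I] (v w : I → ℂ) : ℂ := ∑ i, star (v i) * w i

/-- Outer product |v⟩⟨v|. -/
def outer {I : Type*} (v : I → ℂ) : Matrix I I ℂ := fun i j => v i * star (v j)

def ket0 : Fin 2 → ℂ := fun i => if i = 0 then 1 else 0
def ket1 : Fin 2 → ℂ := fun i => if i = 1 then 1 else 0

/-- 1/√2 as a complex number. -/
def isq2 : ℂ := ((Real.sqrt 2)⁻¹ : ℝ)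

def ketP : Fin 2 → ℂ := fun _ => isq2
def ketM : Fin 2 → ℂ := fun i => if i = 0 then isq2 else -isq2

/-- Tensor product of two qubit state vectors. -/
def tp (v w : Fin 2 → ℂ) : Fin 2 × Fin 2 → ℂ := fun p => v p.1 * w p.2

/-- Partial trace over the first (Alice's) qubit; result acts on Bob's qubit. -/
def ptrA (ρ : Matrix (Fin 2 × Fin 2) (Fin 2 × Fin 2) ℂ) : Matrix (Fin 2) (Fin 2) ℂ :=
  fun b b' => ∑ a, ρ (a, b) (a, b')

/-- Partial trace over the second (Bob's) qubit; result acts on Alice's qubit. -/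
def ptrB (ρ : Matrix (Fin 2 × Fin 2) (Fin 2 × Fin 2) ℂ) : Matrix (Fin 2) (Fin 2) ℂ :=
  fun a a' => ∑ b, ρ (a, b) (a', b)

/-- Nonselective ideal (Lüders) measurement channel in the orthonormal basis `e`. -/
def measChan (e : Fin 4 → (Fin 2 × Fin 2 → ℂ))
    (ρ : Matrix (Fin 2 × Fin 2) (Fin 2 × Fin 2) ℂ) : Matrix (Fin 2 × Fin 2) (Fin 2 × Fin 2) ℂ :=
  ∑ i, outer (e i) * ρ * outer (e i)

/-- Pauli matrices. -/
def sx : Matrix (Fin 2) (Fin 2) ℂ := !![0, 1; 1, 0]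
def sy : Matrix (Fin 2) (Fin 2) ℂ := !![0, -Complex.I; Complex.I, 0]
def sz : Matrix (Fin 2) (Fin 2) ℂ := !![1, 0; 0, -1]

def pauli : Fin 4 → Matrix (Fin 2) (Fin 2) ℂ := ![1, sx, sy, sz]

/-- The Bell state Φ⁺ = (|00⟩+|11⟩)/√2. -/
def phiP : Fin 2 × Fin 2 → ℂ := fun p => if p.1 = p.2 then isq2 else 0

/-- Bell basis parametrized by Pauli operators: `bellP k = (I ⊗ σ_k) Φ⁺`. -/
def bellP (k : Fin 4) : Fin 2 × Fin 2 → ℂ := fun p => isq2 * pauli k p.2 p.1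

/-- Explicit Bell basis in the order Φ⁺, Ψ⁺, Ψ⁻, Φ⁻. -/
def bPhiP : Fin 2 × Fin 2 → ℂ := fun p => if p.1 = p.2 then isq2 else 0
def bPhiM : Fin 2 × Fin 2 → ℂ := fun p => if p.1 = p.2 then (if p.1 = 0 then isq2 else -isq2) else 0
def bPsiP : Fin 2 × Fin 2 → ℂ := fun p => if p.1 = p.2 then 0 else isq2
def bPsiM : Fin 2 × Fin 2 → ℂ := fun p => if p.1 = p.2 then 0 else (if p.1 = 0 then isq2 else -isq2)

def bellE : Fin 4 → (Fin 2 × Fin 2 → ℂ) := ![bPhiP, bPsiP, bPsiM, bPhiM]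

/-- The twisted basis {|00⟩, |01⟩, |1+⟩, |1-⟩}. -/
def twisted : Fin 4 → (Fin 2 × Fin 2 → ℂ) := ![tp ket0 ket0, tp ket0 ket1, tp ket1 ketP, tp ket1 ketM]

/-- Z-basis eigenvectors, indexed by the outcome. -/
def zvec : Fin 2 → Fin 2 → ℂ := ![ket0, ket1]
/-- X-basis eigenvectors, indexed by the outcome. -/
def xvec : Fin 2 → Fin 2 → ℂ := ![ketP, ketM]

/-- Alice's effective measurement vector on (A₁, A₂): she measures A₁ in the Z basis
(outcome a₁) and then A₂ in the Z basis if a₁ = 0, in the X basis if a₁ = 1 (outcome a₂). -/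
def aliceVec (a₁ a₂ : Fin 2) : Fin 2 × Fin 2 → ℂ :=
  tp (zvec a₁) (if a₁ = 0 then zvec a₂ else xvec a₂)

/-- The initial four-qubit state: twisted input state j on (A₁, B₁), resource ebit Φ⁺ on
(A₂, B₂); index ordering ((A₁, A₂), (B₁, B₂)). -/
def twState (j : Fin 4) : (Fin 2 × Fin 2) × (Fin 2 × Fin 2) → ℂ :=
  fun q => twisted j (q.1.1, q.2.1) * phiP (q.1.2, q.2.2)

/-- Amplitude of the outcome triple (a₁, a₂, b): Bob Bell-measures (B₁, B₂) with outcome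
b, Alice performs her adaptive local measurements with outcomes (a₁, a₂). -/
def twAmp (j : Fin 4) (a₁ a₂ : Fin 2) (b : Fin 4) : ℂ :=
  ∑ pA : Fin 2 × Fin 2, ∑ pB : Fin 2 × Fin 2,
    star (aliceVec a₁ a₂ pA) * star (bellP b pB) * twState j (pA, pB)

section Aux

lemma star_isq2 : (starRingEnd ℂ) isq2 = isq2 := Complex.conj_ofReal _

/-- Which value of `a₁` the input `j` forces. -/
def gTab : Fin 4 → Fin 2 := ![0, 0, 1, 1]

/-- Which value of `a₂` the pair `(j, b)` forces. -/
def hTab : Fin 4 → Fin 4 → Fin 2 := ![![0,1,1,0], ![1,0,0,1], ![0,0,1,1], ![1,1,0,0]]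

set_option maxHeartbeats 2000000 in
lemma twAmp_vanish : ∀ (j : Fin 4) (a₁ a₂ : Fin 2) (b : Fin 4),
    ¬(a₁ = gTab j ∧ a₂ = hTab j b) → twAmp j a₁ a₂ b = 0 := by
  intro j a₁ a₂ b hne
  fin_cases j <;> fin_cases a₁ <;> fin_cases a₂ <;> fin_cases b <;>
    first
      | exact absurd (by decide) hne
      | simp [twAmp, Fintype.sum_prod_type, Fin.sum_univ_two, aliceVec, twState, twisted,
          bellP, pauli, phiP, tp, zvec, xvec, ket0, ket1, ketP, ketM, sx, sy, sz]

lemma twAmp_support {j : Fin 4} {a₁ a₂ : Fin 2} {b : Fin 4} (h : twAmp j a₁ a₂ b ≠ 0) :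
    a₁ = gTab j ∧ a₂ = hTab j b := by
  by_contra hc
  exact h (twAmp_vanish j a₁ a₂ b hc)

end Aux

/-- the twisted-measurement localization protocol perfectly discriminates
the twisted basis: a₁ distinguishes {|00⟩,|01⟩} from {|1+⟩,|1-⟩}; a₂ XOR an explicit
function of the Bell outcome identifies the state within the pair; and the supports of
the outcome distributions of distinct inputs are disjoint, so the triple (a₁, a₂, b)
determines the input uniquely. -/
theorem twisted_localization_discriminates :
    (∀ (j : Fin 4) (a₁ a₂ : Fin 2) (b : Fin 4),
      twAmp j a₁ a₂ b ≠ 0 → (a₁ = 0 ↔ (j = 0 ∨ j = 1))) ∧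
    (∃ f : Fin 2 → Fin 4 → Fin 2, ∀ (j : Fin 4) (a₁ a₂ : Fin 2) (b : Fin 4),
      twAmp j a₁ a₂ b ≠ 0 → j = ![![(0 : Fin 4), 1], ![2, 3]] a₁ (a₂ + f a₁ b)) ∧
    (∀ (j j' : Fin 4) (a₁ a₂ : Fin 2) (b : Fin 4),
      twAmp j a₁ a₂ b ≠ 0 → twAmp j' a₁ a₂ b ≠ 0 → j = j') := by
  refine ⟨?_, ⟨fun a₁ b => if a₁ = 0 then hTab 0 b else hTab 2 b, ?_⟩, ?_⟩
  · intro j a₁ a₂ b h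
    obtain ⟨h1, h2⟩ := twAmp_support h
    subst h1 h2
    clear h
    revert j b; decide
  · intro j a₁ a₂ b h
    obtain ⟨h1, h2⟩ := twAmp_support h
    subst h1 h2
    clear h
    revert j b; decide
  · intro j j' a₁ a₂ b h h'
    obtain ⟨h1, h2⟩ := twAmp_support h
    obtain ⟨h1', h2'⟩ := twAmp_support h'
    rw [h1] at h1'; rw [h2] at h2'
    clear h h' h1 h2
    revert j j' b; decide
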